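/- arXiv:2204.06618 — 3 statements merged into one kernel-verified Lean document; each statement's English description precedes it below -/
import Mathlib

section
/- Let T be a GUHAT Transformer in informative normal form with K layers, H heads, and alphabet Σ, and let s = ⌈log₂(|Σ|+2)⌉. Then for any input of length n and any layer k ∈ [0..K], each activation value at layer k can be represented by (H+1)^k · (2·⌈log₂(n+1)⌉ + s) bits, and for k ≥ 1 each attention score at layer k can be represented by 2·(H+1)^{k−1} · (2·⌈log₂(n+1)⌉ + s) bits. -/
open Classical in
/-- The leftmost position maximizing the attention scores `a` (unique hard attention). -/
noncomputable def leftmostArgmax {n : ℕ} (hn : 0 < n) (a : Fin n → ℝ) : Fin n :=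
  have : Nonempty (Fin n) := ⟨⟨0, hn⟩⟩
  (Finset.univ.filter (fun j => ∀ l, a l ≤ a j)).min'
    (by
      obtain ⟨j, hj⟩ := Finite.exists_max a
      exact ⟨j, Finset.mem_filter.mpr ⟨Finset.mem_univ _, hj⟩⟩)

/-- A generalized (unique hard attention) Transformer over alphabet `σ`, with `K` layers
and `H` heads: arbitrary activation values `A`, an input function `f` (taking the symbol,
which may be the end-of-sequence marker `$ = Sum.inr ()`, the position, and the input
length), real-valued attention functions for each layer `k ∈ [1..K]` and head
`h ∈ [1..H]`, activation functions for each layer, and a `{0,1}`-valued output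
function `g`. -/
structure GT (σ : Type) where
  K : ℕ
  H : ℕ
  A : Type
  f : (σ ⊕ Unit) → ℕ → ℕ → A
  fatt : ℕ → ℕ → A → A → ℝ
  fact : ℕ → A → (Fin H → A) → A
  g : A → Bool

namespace GT

variable {σ : Type}

/-- The input sequence of symbols for input string `x`, with `$` appended. -/
def inputSeq (x : List σ) : Fin (x.length + 1) → (σ ⊕ Unit) := fun i =>
  if h : (i : ℕ) < x.length then Sum.inl (x.get ⟨i, h⟩) else Sum.inr ()

/-- Initial (layer-0) activation values `y⁰ᵢ = f(xᵢ, i, n)` (positions are `1`-based). -/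
def y0 (T : GT σ) (x : List σ) : Fin (x.length + 1) → T.A := fun i =>
  T.f (inputSeq x i) ((i : ℕ) + 1) (x.length + 1)

/-- One layer of unique-hard-attention computation: each position attends, for each
head, to the leftmost position maximizing the attention score, and applies the
activation function. Layers are numbered `1, …, K`. -/
noncomputable def layer (T : GT σ) {n : ℕ} (hn : 0 < n) (k : ℕ) (y : Fin n → T.A) :
    Fin n → T.A := fun i =>
  T.fact k (y i)
    (fun _h => y (leftmostArgmax hn (fun j => T.fatt k (_h : Fin T.H).val.succ (y i) (y j))))

/-- The activation values at layer `k` (layer `0` being the initial activations). -/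
noncomputable def acts (T : GT σ) {n : ℕ} (hn : 0 < n) (y₀ : Fin n → T.A) :
    ℕ → Fin n → T.A
  | 0 => y₀
  | k + 1 => T.layer hn (k + 1) (T.acts hn y₀ k)

/-- `T` accepts `x` iff the output function applied to the final-layer activation at the
last position of `x$` equals `1`. -/
noncomputable def accepts (T : GT σ) (x : List σ) : Prop :=
  T.g (T.acts (Nat.succ_pos _) (T.y0 x) T.K ⟨x.length, Nat.lt_succ_self _⟩) = true

/-- The language recognized by `T`: `L(T) = {x ∈ σ* : T accepts x$}`. -/
def lang (T : GT σ) : Set (List σ) := {x | T.accepts x}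

end GT

/-- The type of activation values at layer `k` of a GUHAT in informative normal form:
layer-0 activations are triples `(σ, i, n)` with `σ ∈ Σ ∪ {$}`, and layer-`k+1`
activations are `(H+1)`-tuples of layer-`k` activations. -/
def NFAct (σ : Type) (H : ℕ) : ℕ → Type
  | 0 => (σ ⊕ Unit) × ℕ × ℕ
  | k + 1 => NFAct σ H k × (Fin H → NFAct σ H k)

/-- A GUHAT Transformer in informative normal form, with `K` layers and `H` heads:
the input function returns the triple of its arguments, the activation functions return
the tuple of their arguments (both therefore built into the semantics), and the
attention function feeding layer `k+1` maps pairs of layer-`k` activation values to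
nonnegative integers. -/
structure NFT (σ : Type) where
  K : ℕ
  H : ℕ
  fatt : (k : ℕ) → ℕ → NFAct σ H k → NFAct σ H k → ℕ
  g : NFAct σ H K → Bool

namespace NFT

variable {σ : Type}

/-- Initial activations for input `x$`: `f(σ,i,n) = (σ,i,n)` with `1`-based positions. -/
def y0 (T : NFT σ) (x : List σ) : Fin (x.length + 1) → NFAct σ T.H 0 := fun i =>
  (GT.inputSeq x i, (i : ℕ) + 1, x.length + 1)

/-- The activation values of an informative-normal-form GUHAT at each layer, computed
with unique hard attention. -/
noncomputable def acts (T : NFT σ) {n : ℕ} (hn : 0 < n) (y₀ : Fin n → NFAct σ T.H 0) :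
    (k : ℕ) → Fin n → NFAct σ T.H k
  | 0 => y₀
  | k + 1 => fun i =>
      (T.acts hn y₀ k i,
       fun h => T.acts hn y₀ k (leftmostArgmax hn
         (fun j => ((T.fatt k (h : Fin T.H).val.succ (T.acts hn y₀ k i)
            (T.acts hn y₀ k j) : ℕ) : ℝ))))

/-- Acceptance: the output function applied to the final activation at the last
position equals `1`. -/
noncomputable def accepts (T : NFT σ) (x : List σ) : Prop :=
  T.g (T.acts (Nat.succ_pos _) (T.y0 x) T.K ⟨x.length, Nat.lt_succ_self _⟩) = true

/-- The language recognized by `T`. -/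
def lang (T : NFT σ) : Set (List σ) := {x | T.accepts x}

/-- The set of activation values at layer `k` attained by `T` on some input of
length `n` (length counted including the end-of-sequence marker). -/
def reach (T : NFT σ) (n k : ℕ) : Set (NFAct σ T.H k) :=
  {y | ∃ (x : List σ) (i : Fin (x.length + 1)),
    x.length + 1 = n ∧ T.acts (Nat.succ_pos _) (T.y0 x) k i = y}

/-- The normal-form range condition on attention values: each attention function
returns an integer in `[0..N−1]`, where `N` is the number of possible ordered pairs of
activation values at the previous layer. -/
def attBounded (T : NFT σ) : Prop :=
  ∀ (n k h : ℕ), ∀ y y' : NFAct σ T.H k, y ∈ T.reach n k → y' ∈ T.reach n k →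
    T.fatt k h y y' < ((T.reach n k) ×ˢ (T.reach n k)).ncard

end NFT

private lemma nft_transfer {α β γ : Type*} [Fintype β] [Fintype γ] {S : Set α} {e : α → β}
    (he : Set.InjOn e S) (hc : Fintype.card β ≤ Fintype.card γ) :
    ∃ e' : α → γ, Set.InjOn e' S := by
  obtain ⟨emb⟩ := Function.Embedding.nonempty_of_card_le hc
  exact ⟨emb ∘ e, fun a ha b hb h => he ha hb (emb.injective h)⟩

private lemma nft_bits_injOn (L : ℕ) :
    Set.InjOn (fun a : ℕ => fun j : Fin L => a.testBit j) {a | a < 2 ^ L} := by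
  intro a ha b hb h
  refine Nat.eq_of_testBit_eq fun j => ?_
  by_cases hj : j < L
  · exact congrFun h ⟨j, hj⟩
  · rw [Nat.testBit_eq_false_of_lt
        (lt_of_lt_of_le ha (Nat.pow_le_pow_right two_pos (le_of_not_gt hj))),
      Nat.testBit_eq_false_of_lt
        (lt_of_lt_of_le hb (Nat.pow_le_pow_right two_pos (le_of_not_gt hj)))]

private lemma nft_reach_zero {σ : Type} (T : NFT σ) {n : ℕ} {y : NFAct σ T.H 0}
    (hy : y ∈ T.reach n 0) : y.2.1 ≤ n ∧ y.2.2 = n := by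
  obtain ⟨x, i, hxn, hact⟩ := hy
  subst hact
  refine ⟨?_, by simp [NFT.acts, NFT.y0, hxn]⟩
  have : (i : ℕ) < n := hxn ▸ i.isLt
  simpa [NFT.acts, NFT.y0] using Nat.succ_le_of_lt this

private lemma nft_reach_succ {σ : Type} (T : NFT σ) {n k : ℕ} {y : NFAct σ T.H (k + 1)}
    (hy : y ∈ T.reach n (k + 1)) : y.1 ∈ T.reach n k ∧ ∀ h, y.2 h ∈ T.reach n k := by
  obtain ⟨x, i, hxn, hact⟩ := hy
  subst hact
  exact ⟨⟨x, i, hxn, rfl⟩, fun h => ⟨x, _, hxn, rfl⟩⟩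

/-- Bit bounds for informative normal form. Let `T` be a GUHAT Transformer in
informative normal form with `K` layers, `H` heads, and finite alphabet `Σ`, and let
`s = ⌈log₂(|Σ|+2)⌉`. Then for any input length `n` and any layer `k ∈ [0..K]`, each
activation value at layer `k` can be represented by `(H+1)^k·(2·⌈log₂(n+1)⌉ + s)` bits
(there is an injective encoding of the attained activation values into bit strings of
that length), and for `k ≥ 1` each attention score at layer `k` can be represented by
`2·(H+1)^{k−1}·(2·⌈log₂(n+1)⌉ + s)` bits. -/
theorem nft_bit_bounds (σ : Type) [Fintype σ] (T : NFT σ) (hT : T.attBounded) (n : ℕ) :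
    (∀ k ≤ T.K, ∃ e : NFAct σ T.H k →
        (Fin ((T.H + 1) ^ k * (2 * Nat.clog 2 (n + 1) + Nat.clog 2 (Fintype.card σ + 2)))
          → Bool),
        Set.InjOn e (T.reach n k)) ∧
    (∀ k, 1 ≤ k → k ≤ T.K → ∀ (h : ℕ), ∀ y y' : NFAct σ T.H (k - 1),
        y ∈ T.reach n (k - 1) → y' ∈ T.reach n (k - 1) →
        T.fatt (k - 1) h y y' <
          2 ^ (2 * (T.H + 1) ^ (k - 1) *
            (2 * Nat.clog 2 (n + 1) + Nat.clog 2 (Fintype.card σ + 2)))) := by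
  have h2 : (1:ℕ) < 2 := one_lt_two
  set L := Nat.clog 2 (n + 1) with hL
  set s := Nat.clog 2 (Fintype.card σ + 2) with hs
  have key : ∀ k, ∃ e : NFAct σ T.H k → (Fin ((T.H + 1) ^ k * (2 * L + s)) → Bool),
      Set.InjOn e (T.reach n k) := by
    intro k
    induction k with
    | zero =>
      obtain ⟨embσ⟩ : Nonempty ((σ ⊕ Unit) ↪ (Fin s → Bool)) := by
        apply Function.Embedding.nonempty_of_card_le
        simp only [Fintype.card_sum, Fintype.card_unit, Fintype.card_fun, Fintype.card_bool,
          Fintype.card_fin]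
        calc Fintype.card σ + 1 ≤ Fintype.card σ + 2 := by omega
          _ ≤ 2 ^ s := Nat.le_pow_clog h2 _
      have hn2 : n < 2 ^ L := lt_of_lt_of_le (Nat.lt_succ_self n) (Nat.le_pow_clog h2 _)
      have step1 : ∃ e1 : NFAct σ T.H 0 →
          ((Fin s → Bool) × (Fin L → Bool) × (Fin L → Bool)),
          Set.InjOn e1 (T.reach n 0) := by
        refine ⟨fun y => (embσ y.1, (fun j => y.2.1.testBit j), (fun j => y.2.2.testBit j)), ?_⟩
        intro y hy y' hy' heq
        obtain ⟨hb1, hb2⟩ := nft_reach_zero T hy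
        obtain ⟨hb1', hb2'⟩ := nft_reach_zero T hy'
        have k1 : y.1 = y'.1 := embσ.injective (congrArg Prod.fst heq)
        have k2 : y.2.1 = y'.2.1 :=
          nft_bits_injOn L (lt_of_le_of_lt hb1 hn2) (lt_of_le_of_lt hb1' hn2)
            (congrArg (fun p => p.2.1) heq)
        have k3 : y.2.2 = y'.2.2 := hb2.trans hb2'.symm
        exact Prod.ext k1 (Prod.ext k2 k3)
      obtain ⟨e1, he1⟩ := step1
      have hcard : Fintype.card ((Fin s → Bool) × (Fin L → Bool) × (Fin L → Bool))
          ≤ Fintype.card (Fin ((T.H + 1) ^ 0 * (2 * L + s)) → Bool) := by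
        simp only [Fintype.card_prod, Fintype.card_fun, Fintype.card_bool, Fintype.card_fin,
          pow_zero, one_mul]
        rw [← pow_add, ← pow_add]
        exact Nat.pow_le_pow_right (by norm_num) (by omega)
      exact nft_transfer he1 hcard
    | succ k ih =>
      obtain ⟨e, he⟩ := ih
      have step1 : ∃ e1 : NFAct σ T.H (k + 1) →
          ((Fin ((T.H + 1) ^ k * (2 * L + s)) → Bool) ×
            (Fin T.H → Fin ((T.H + 1) ^ k * (2 * L + s)) → Bool)),
          Set.InjOn e1 (T.reach n (k + 1)) := by
        refine ⟨fun y => (e y.1, fun h => e (y.2 h)), ?_⟩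
        intro y hy y' hy' heq
        obtain ⟨m1, m2⟩ := nft_reach_succ T hy
        obtain ⟨m1', m2'⟩ := nft_reach_succ T hy'
        have k1 : y.1 = y'.1 := he m1 m1' (congrArg Prod.fst heq)
        have k2 : y.2 = y'.2 := by
          funext h
          exact he (m2 h) (m2' h) (congrFun (congrArg Prod.snd heq) h)
        exact Prod.ext k1 k2
      obtain ⟨e1, he1⟩ := step1
      have hexp : (T.H + 1) ^ (k + 1) * (2 * L + s)
          = (T.H + 1) ^ k * (2 * L + s) + (T.H + 1) ^ k * (2 * L + s) * T.H := by
        rw [pow_succ]; ring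
      have hcard : Fintype.card ((Fin ((T.H + 1) ^ k * (2 * L + s)) → Bool) ×
            (Fin T.H → Fin ((T.H + 1) ^ k * (2 * L + s)) → Bool))
          ≤ Fintype.card (Fin ((T.H + 1) ^ (k + 1) * (2 * L + s)) → Bool) := by
        simp only [Fintype.card_prod, Fintype.card_fun, Fintype.card_bool, Fintype.card_fin]
        rw [← pow_mul, ← pow_add, hexp]
      exact nft_transfer he1 hcard
  refine ⟨fun k _ => key k, ?_⟩
  intro k hk1 hkK h y y' hy hy'
  set m := (T.H + 1) ^ (k - 1) * (2 * L + s) with hm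
  obtain ⟨e, he⟩ := key (k - 1)
  have hinj2 : Set.InjOn (Prod.map e e) ((T.reach n (k - 1)) ×ˢ (T.reach n (k - 1))) := by
    rintro ⟨a, b⟩ hab ⟨c, d⟩ hcd hmap
    simp only [Set.mem_prod] at hab hcd
    have q1 : e a = e c := congrArg Prod.fst hmap
    have q2 : e b = e d := congrArg Prod.snd hmap
    exact Prod.ext (he hab.1 hcd.1 q1) (he hab.2 hcd.2 q2)
  have hcard : ((T.reach n (k - 1)) ×ˢ (T.reach n (k - 1))).ncard ≤ 2 ^ m * 2 ^ m := by
    rw [← Set.ncard_image_of_injOn hinj2]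
    calc (Prod.map e e '' _).ncard
        ≤ (Set.univ : Set ((Fin m → Bool) × (Fin m → Bool))).ncard :=
          Set.ncard_le_ncard (Set.subset_univ _) Set.finite_univ
      _ = 2 ^ m * 2 ^ m := by
          rw [Set.ncard_univ, Nat.card_eq_fintype_card]
          simp [Fintype.card_prod, Fintype.card_fun]
  calc T.fatt (k - 1) h y y' < _ := hT n (k - 1) h y y' hy hy'
    _ ≤ 2 ^ m * 2 ^ m := hcard
    _ = 2 ^ (2 * (T.H + 1) ^ (k - 1) * (2 * L + s)) := by
        rw [← pow_add]; congr 1; rw [hm]; ring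
end

section
/- The number of distinct activation values at layer k of a GUHAT Transformer in informative normal form with H heads on inputs of length n over alphabet Σ is at most ((|Σ|+1)·n)^{(H+1)^k}. -/
/-! Layer-`0` values are triples `(symbol, position, length)`, and a layer-`k+1` value is
an `(H+1)`-tuple of layer-`k` values attained at the same length. So the attained values
at layer `k` are at most `(|Σ|+1)·n` triples, tupled `k` times, giving the exponent
`(H+1)^k`. -/

theorem Set.encard_prod_univ_pi_const {α : Type*} (s : Set α) (m : ℕ) :
    (s ×ˢ Set.univ.pi fun _ : Fin m => s).encard = s.encard ^ (m + 1) := by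
  simp [Set.encard_prod, Set.encard_pi_eq_prod_encard, pow_succ']

namespace NFT

variable {σ : Type} (T : NFT σ) (n : ℕ)

theorem reach_zero_subset :
    T.reach n 0 ⊆ Set.univ ×ˢ (Set.Icc 1 n ×ˢ {n}) := by
  rintro _ ⟨x, i, rfl, rfl⟩
  exact ⟨trivial, ⟨Nat.le_add_left 1 _, Nat.succ_le_succ (Nat.le_of_lt_succ i.isLt)⟩, rfl⟩

theorem reach_succ_subset (k : ℕ) :
    T.reach n (k + 1) ⊆ T.reach n k ×ˢ Set.univ.pi fun _ => T.reach n k := by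
  rintro _ ⟨x, i, hx, rfl⟩
  exact ⟨⟨x, i, hx, rfl⟩, fun _ _ => ⟨x, _, hx, rfl⟩⟩

theorem encard_reach_zero_le [Fintype σ] :
    (T.reach n 0).encard ≤ (Fintype.card σ + 1) * n := by
  have hIcc : (Set.Icc 1 n).encard = n := by
    rw [← Finset.coe_Icc, Set.encard_coe_eq_coe_finsetCard, Nat.card_Icc, Nat.add_sub_cancel]
  calc (T.reach n 0).encard ≤ (Set.univ ×ˢ (Set.Icc 1 n ×ˢ {n})).encard :=
        Set.encard_le_encard (T.reach_zero_subset n)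
    _ = (Fintype.card σ + 1) * n := by
        simp [Set.encard_prod, hIcc]

-- Bounding `encard` rather than `ncard` (which is `0` on infinite sets) keeps finiteness
-- through the induction.
theorem encard_reach_le [Fintype σ] (k : ℕ) :
    (T.reach n k).encard ≤ (((Fintype.card σ + 1) * n) ^ ((T.H + 1) ^ k) : ℕ) := by
  induction k with
  | zero => simpa using T.encard_reach_zero_le n
  | succ k ih =>
    calc (T.reach n (k + 1)).encard
        ≤ (T.reach n k).encard ^ (T.H + 1) := by
          rw [← Set.encard_prod_univ_pi_const]
          exact Set.encard_le_encard (T.reach_succ_subset n k)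
      _ ≤ _ := by
          grw [ih]
          push_cast
          rw [← pow_mul, pow_succ]

end NFT

theorem nft_reach_card_bound_general (σ : Type) [Fintype σ] (T : NFT σ) (n k : ℕ) :
    (T.reach n k).ncard ≤ ((Fintype.card σ + 1) * n) ^ ((T.H + 1) ^ k) :=
  (Set.encard_le_coe_iff_finite_ncard_le.1 (T.encard_reach_le n k)).2

/-- The number of distinct activation values at layer `k` of a GUHAT Transformer in
informative normal form with `H` heads, on inputs of length `n` over a finite alphabet
`Σ`, is at most `((|Σ|+1)·n)^{(H+1)^k}`. -/
theorem nft_reach_card_bound (σ : Type) [Fintype σ] (T : NFT σ) (n k : ℕ)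
    (hk : k ≤ T.K) :
    (T.reach n k).ncard ≤ ((Fintype.card σ + 1) * n) ^ ((T.H + 1) ^ k) :=
  nft_reach_card_bound_general σ T n k
end

section
/- The language PALINDROMES over any finite alphabet Σ is recognizable by a generalized unique hard attention Transformer (GUHAT) with 2 layers and 1 head. -/
theorem List.reverse_eq_self_iff_getElem {α : Type*} {x : List α} :
    x.reverse = x ↔ ∀ (i : ℕ) (h : i < x.length), x[i] = x[x.length - 1 - i] := by
  rw [eq_comm, List.ext_getElem_iff]
  simp only [List.length_reverse, List.getElem_reverse, true_and]
  exact ⟨fun h i hi => h i hi (by omega), fun h i hi _ => h i hi⟩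

section leftmostArgmax

variable {n : ℕ} (hn : 0 < n)

theorem le_leftmostArgmax (a : Fin n → ℝ) (l : Fin n) :
    a l ≤ a (leftmostArgmax hn a) := by
  classical
  unfold leftmostArgmax
  exact (Finset.mem_filter.mp (Finset.min'_mem (Finset.univ.filter fun j => ∀ l, a l ≤ a j) _)).2 l

theorem leftmostArgmax_eq_of_lt {a : Fin n → ℝ} {j : Fin n} (h : ∀ l, l ≠ j → a l < a j) :
    leftmostArgmax hn a = j := by
  by_contra hne
  exact (h _ hne).not_ge (le_leftmostArgmax hn a j)

theorem apply_leftmostArgmax_ite_iff_forall (p : Fin n → Prop) [DecidablePred p] :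
    p (leftmostArgmax hn fun j => if p j then 0 else 1) ↔ ∀ j, p j := by
  refine ⟨fun hsel j => by_contra fun hj => ?_, fun h => h _⟩
  have := le_leftmostArgmax hn (fun j => if p j then (0 : ℝ) else 1) j
  simp only [hsel, hj, if_true, if_false] at this
  exact absurd this zero_lt_one.not_ge

end leftmostArgmax

structure PalAct (σ : Type) where
  sym : σ ⊕ Unit
  pos : ℕ
  len : ℕ
  ok : Bool

open Classical in
/-- Layer 1: position `i` of `x$` (of length `n`) attends to the mirror position `n - i` and
records whether the two symbols agree; the `$` position, which has no mirror, records `true`.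
Layer 2: the last position attends to the leftmost position that recorded a mismatch, if any,
and copies its record. -/
noncomputable def palT (σ : Type) : GT σ where
  K := 2
  H := 1
  A := PalAct σ
  f s i n := ⟨s, i, n, true⟩
  fatt k _ a b :=
    if k = 1 then (if a.pos + b.pos = a.len then 1 else 0)
    else (if b.ok then 0 else 1)
  fact k a p :=
    if k = 1 then { a with ok := decide (a.sym = Sum.inr () ∨ a.sym = (p 0).sym) }
    else { a with ok := (p 0).ok }
  g a := a.ok

namespace palT

variable {σ : Type} (x : List σ)

noncomputable abbrev actsOne : Fin (x.length + 1) → PalAct σ :=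
  (palT σ).acts (Nat.succ_pos _) ((palT σ).y0 x) 1

theorem attends_mirror (k : ℕ) {i : Fin (x.length + 1)} (hi : (i : ℕ) < x.length) :
    leftmostArgmax (Nat.succ_pos _)
        (fun j => (palT σ).fatt 1 k ((palT σ).y0 x i) ((palT σ).y0 x j)) =
      ⟨x.length - 1 - i, by omega⟩ := by
  refine leftmostArgmax_eq_of_lt _ fun l hl => ?_
  have hl' : (i : ℕ) + 1 + ((l : ℕ) + 1) ≠ x.length + 1 := fun h => hl (Fin.ext (by simp; omega))
  have hmirror : (i : ℕ) + 1 + (x.length - 1 - i + 1) = x.length + 1 := by omega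
  simp [palT, GT.y0, hl', hmirror]

theorem actsOne_ok_iff (i : Fin (x.length + 1)) :
    (actsOne x i).ok = true ↔ ∀ h : (i : ℕ) < x.length, x[(i : ℕ)] = x[x.length - 1 - i] := by
  show ((palT σ).layer _ 1 ((palT σ).y0 x) i).ok = true ↔ _
  by_cases hi : (i : ℕ) < x.length
  · have hmirror : x.length - 1 - i < x.length := by omega
    simp only [GT.layer, attends_mirror x _ hi]
    simp [palT, GT.y0, GT.inputSeq, hi, hmirror]
  · simp [GT.layer, palT, GT.y0, GT.inputSeq, hi]

theorem accepts_iff : (palT σ).accepts x ↔ ∀ i, (actsOne x i).ok = true :=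
  apply_leftmostArgmax_ite_iff_forall _ fun i => (actsOne x i).ok = true

end palT

theorem palindromes_in_GUHAT_general (σ : Type) :
    ∃ T : GT σ, T.K = 2 ∧ T.H = 1 ∧ T.lang = {x : List σ | x.reverse = x} := by
  refine ⟨palT σ, rfl, rfl, Set.ext fun x => ?_⟩
  show (palT σ).accepts x ↔ x.reverse = x
  simp only [palT.accepts_iff, palT.actsOne_ok_iff, List.reverse_eq_self_iff_getElem]
  exact ⟨fun h i hi => h ⟨i, by omega⟩ hi, fun h i => h i⟩

/-- `PALINDROMES` over any finite alphabet `Σ` is recognizable by a generalized unique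
hard attention Transformer (GUHAT) with 2 layers and 1 head. -/
theorem palindromes_in_GUHAT (σ : Type) [Fintype σ] :
    ∃ T : GT σ, T.K = 2 ∧ T.H = 1 ∧ T.lang = {x : List σ | x.reverse = x} :=
  palindromes_in_GUHAT_general σ
end
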